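/- Let p be an odd prime and (e_1,...,e_n) a sequence of nonnegative integers. In F_p[y_1,...,y_n]: [e_1,...,e_{n-1}, e_n+n] = Σ_{s=0}^{n-1} (-1)^{n+s-1} [e_1,...,e_{n-1}, e_n+s] · Q_{n,s}^{p^{e_n}}, where Q_{n,s} are the Dickson invariants in y_1,...,y_n. -/
import Mathlib


open MvPolynomial Finset

/-- `br p e = det (y_i ^ (p ^ e_j))` in `F_p[y_1,…,y_n]`. -/
noncomputable def br (p : ℕ) {n : ℕ} (e : Fin n → ℕ) : MvPolynomial (Fin n) (ZMod p) :=
  Matrix.det (Matrix.of fun i j : Fin n => (X i : MvPolynomial (Fin n) (ZMod p)) ^ p ^ e j)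

/-- `L_n = [0,1,…,n-1]`. -/
noncomputable def Lpoly (p n : ℕ) : MvPolynomial (Fin n) (ZMod p) :=
  br p (fun j : Fin n => (j : ℕ))

/-- `L_{n,s} = [0,…,ŝ,…,n]`. -/
noncomputable def Ls (p n s : ℕ) : MvPolynomial (Fin n) (ZMod p) :=
  br p (fun j : Fin n => if (j : ℕ) < s then (j : ℕ) else (j : ℕ) + 1)

lemma prod_X_pow_eq (p' : ℕ) {n : ℕ} (a : Fin n → ℕ) :
    (∏ i : Fin n, (X i : MvPolynomial (Fin n) (ZMod p')) ^ a i)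
      = monomial (∑ i : Fin n, Finsupp.single i (a i)) 1 := by
  simp only [X_pow_eq_monomial, monomial_sum_one]

lemma Lpoly_ne_zero (p : ℕ) (hp : p.Prime) (n : ℕ) : Lpoly p n ≠ 0 := by
  haveI : Fact p.Prime := ⟨hp⟩
  intro h
  have hc : MvPolynomial.coeff (∑ i : Fin n, Finsupp.single i (p ^ (i : ℕ))) (Lpoly p n) = 1 := by
    rw [Lpoly, br, Matrix.det_apply']
    rw [MvPolynomial.coeff_sum]
    have term : ∀ σ : Equiv.Perm (Fin n),
        MvPolynomial.coeff (∑ i : Fin n, Finsupp.single i (p ^ (i : ℕ)))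
          (((Equiv.Perm.sign σ : ℤ) : MvPolynomial (Fin n) (ZMod p)) * ∏ i : Fin n,
            (Matrix.of fun i j : Fin n => (X i : MvPolynomial (Fin n) (ZMod p)) ^ p ^ (j : ℕ)) (σ i) i)
        = if σ = 1 then 1 else 0 := by
      intro σ
      have hprod : (∏ i : Fin n,
          (Matrix.of fun i j : Fin n => (X i : MvPolynomial (Fin n) (ZMod p)) ^ p ^ (j : ℕ)) (σ i) i)
          = monomial (∑ i : Fin n, Finsupp.single i (p ^ ((σ⁻¹ i : Fin n) : ℕ))) 1 := by
        rw [← prod_X_pow_eq]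
        rw [← Equiv.prod_comp σ (fun i => (X i : MvPolynomial (Fin n) (ZMod p)) ^ p ^ ((σ⁻¹ i : Fin n) : ℕ))]
        simp [Matrix.of_apply]
      rw [hprod]
      have hcast : (((Equiv.Perm.sign σ : ℤ)) : MvPolynomial (Fin n) (ZMod p))
          = C ((Equiv.Perm.sign σ : ℤ) : ZMod p) := (map_intCast (C : ZMod p →+* _) _).symm
      rw [hcast, coeff_C_mul, coeff_monomial]
      by_cases hσ : σ = 1
      · subst hσ; simp
      · rw [if_neg, if_neg hσ, mul_zero]
        intro hEq
        apply hσ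
        have : ∀ j : Fin n, ((σ⁻¹ j : Fin n) : ℕ) = (j : ℕ) := by
          intro j
          have := DFunLike.congr_fun hEq j
          simp only [Finsupp.finset_sum_apply, Finsupp.single_apply] at this
          rw [Finset.sum_ite_eq' univ j, Finset.sum_ite_eq' univ j] at this
          simp only [mem_univ, if_true] at this
          exact Nat.pow_right_injective hp.two_le this
        have hinv : σ⁻¹ = 1 := by
          ext j
          exact this j
        simpa using congrArg Inv.inv hinv
    rw [Finset.sum_congr rfl (fun σ _ => term σ)]
    simp
  rw [h, MvPolynomial.coeff_zero] at hc
  exact zero_ne_one hc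

lemma val_succAbove {n : ℕ} (j : Fin (n + 2)) (j' : Fin (n + 1)) :
    ((j.succAbove j' : Fin (n + 2)) : ℕ) = if (j' : ℕ) < (j : ℕ) then (j' : ℕ) else (j' : ℕ) + 1 := by
  rw [Fin.succAbove]
  split_ifs with h1 h2 h2
  · simp
  · exact absurd (by simpa [Fin.lt_def] using h1) h2
  · exact absurd (by simpa [Fin.lt_def] using h2) h1
  · simp

lemma cofactor (p : ℕ) (n : ℕ) (i : Fin (n + 1)) :
    ∑ s : Fin (n + 2), (-1 : MvPolynomial (Fin (n + 1)) (ZMod p)) ^ (n + 1 + (s : ℕ)) *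
      Ls p (n + 1) (s : ℕ) * (X i : MvPolynomial (Fin (n + 1)) (ZMod p)) ^ p ^ (s : ℕ) = 0 := by
  set R := MvPolynomial (Fin (n + 1)) (ZMod p)
  set rows : Fin (n + 2) → R := Fin.snoc (fun k : Fin (n + 1) => X k) (X i) with hrows
  set A : Matrix (Fin (n + 2)) (Fin (n + 2)) R :=
    Matrix.of (fun r c => rows r ^ p ^ (c : ℕ)) with hA
  have hdet0 : A.det = 0 := by
    apply Matrix.det_zero_of_row_eq (i := Fin.castSucc i) (j := Fin.last (n + 1))
      (Fin.castSucc_lt_last i).ne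
    funext c
    simp [hA, hrows]
  have hexp := Matrix.det_succ_row A (Fin.last (n + 1))
  rw [hdet0] at hexp
  have hminor : ∀ j : Fin (n + 2),
      (A.submatrix (Fin.last (n + 1)).succAbove j.succAbove).det = Ls p (n + 1) (j : ℕ) := by
    intro j
    rw [Ls, br]
    congr 1
    funext i' j'
    simp only [Matrix.submatrix_apply, Fin.succAbove_last, hA, Matrix.of_apply, hrows,
      Fin.snoc_castSucc, val_succAbove]
  have hlastrow : ∀ j : Fin (n + 2), A (Fin.last (n + 1)) j = (X i : R) ^ p ^ (j : ℕ) := by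
    intro j; simp [hA, hrows]
  rw [Finset.sum_congr rfl (fun j _ => by rw [hminor j, hlastrow j])] at hexp
  refine Eq.trans ?_ hexp.symm
  apply Finset.sum_congr rfl
  intro j _
  simp only [Fin.val_last]
  ring

lemma Ls_top (p n : ℕ) : Ls p (n + 1) (n + 1) = Lpoly p (n + 1) := by
  rw [Ls, Lpoly]
  exact congrArg (br p) (funext fun j => by simp [j.is_lt])

lemma det_col_sum {R : Type*} [CommRing R] {m : Type*} [DecidableEq m] [Fintype m]
    (M : Matrix m m R) (j : m) {ι : Type*} (s : Finset ι) (v : ι → m → R) :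
    (M.updateCol j (fun i => ∑ k ∈ s, v k i)).det
      = ∑ k ∈ s, (M.updateCol j (v k)).det := by
  classical
  induction s using Finset.induction_on with
  | empty =>
    simp only [Finset.sum_empty]
    rw [show (fun _ : m => (0 : R)) = ((0 : R) • fun _ : m => (0 : R)) from by
      funext; simp, Matrix.det_updateCol_smul, zero_mul]
  | @insert a t hk ih =>
    simp only [Finset.sum_insert hk]
    rw [show (fun i => v a i + ∑ k ∈ t, v k i)
        = (v a + fun i => ∑ k ∈ t, v k i) from rfl,
      Matrix.det_updateCol_add, ih]

lemma frob_cofactor (p : ℕ) (hp : p.Prime) (hodd : Odd p) (n E : ℕ) (i : Fin (n + 1)) :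
    ∑ s : Fin (n + 2), (-1 : MvPolynomial (Fin (n + 1)) (ZMod p)) ^ (n + 1 + (s : ℕ)) *
      (Ls p (n + 1) (s : ℕ)) ^ p ^ E *
      (X i : MvPolynomial (Fin (n + 1)) (ZMod p)) ^ p ^ ((s : ℕ) + E) = 0 := by
  haveI : Fact p.Prime := ⟨hp⟩
  set R := MvPolynomial (Fin (n + 1)) (ZMod p)
  have hoddq : Odd (p ^ E) := hodd.pow
  have h0 := congrArg (iterateFrobenius R p E) (cofactor p n i)
  rw [map_zero, map_sum] at h0
  refine Eq.trans ?_ h0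
  apply Finset.sum_congr rfl
  intro s _
  rw [iterateFrobenius_def, mul_pow, mul_pow]
  congr 1
  · congr 1
    rw [← pow_mul, mul_comm, pow_mul, hoddq.neg_one_pow]
  · rw [← pow_mul, ← pow_add]

lemma main_det (p n : ℕ) (hp : p.Prime) (hodd : Odd p) (e : Fin (n + 1) → ℕ) :
    Lpoly p (n + 1) ^ p ^ e (Fin.last n) *
      br p (fun j : Fin (n + 1) => if j = Fin.last n then e j + (n + 1) else e j) =
    ∑ s : Fin (n + 1),
      (-1 : MvPolynomial (Fin (n + 1)) (ZMod p)) ^ (n + (s : ℕ)) *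
        br p (fun j : Fin (n + 1) => if j = Fin.last n then e j + (s : ℕ) else e j) *
        (Ls p (n + 1) (s : ℕ)) ^ p ^ e (Fin.last n) := by
  haveI : Fact p.Prime := ⟨hp⟩
  set R := MvPolynomial (Fin (n + 1)) (ZMod p) with hR
  set E := e (Fin.last n) with hE
  set q := p ^ E with hq
  -- the key pointwise column identity
  have key : ∀ i : Fin (n + 1),
      Lpoly p (n + 1) ^ q * (X i : R) ^ p ^ (E + (n + 1)) =
      ∑ s : Fin (n + 1), (-1 : R) ^ (n + (s : ℕ)) * (Ls p (n + 1) (s : ℕ)) ^ q *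
        (X i : R) ^ p ^ (E + (s : ℕ)) := by
    intro i
    have h := frob_cofactor p hp hodd n E i
    rw [Fin.sum_univ_castSucc] at h
    simp only [Fin.coe_castSucc, Fin.val_last] at h
    have hlast : (-1 : R) ^ (n + 1 + (n + 1)) * (Ls p (n + 1) (n + 1)) ^ q *
        (X i : R) ^ p ^ (n + 1 + E) = Lpoly p (n + 1) ^ q * (X i : R) ^ p ^ (E + (n + 1)) := by
      rw [Ls_top, Even.neg_one_pow ⟨n + 1, rfl⟩, one_mul, Nat.add_comm (n+1) E]
    rw [hlast] at h
    rw [eq_neg_of_add_eq_zero_right h, ← Finset.sum_neg_distrib]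
    apply Finset.sum_congr rfl
    intro s _
    have hsign : (-1 : R) ^ (n + 1 + (s : ℕ)) = -(-1 : R) ^ (n + (s : ℕ)) := by
      rw [show n + 1 + (s : ℕ) = (n + (s : ℕ)) + 1 from by ring, pow_succ]; ring
    rw [hsign, Nat.add_comm (s : ℕ) E]
    ring
  -- determinant manipulation
  rw [br]
  set M : Matrix (Fin (n + 1)) (Fin (n + 1)) R :=
    Matrix.of (fun i j => (X i : R) ^ p ^ (if j = Fin.last n then e j + (n + 1) else e j))
    with hM
  have step1 : Lpoly p (n + 1) ^ q * M.det
      = (M.updateCol (Fin.last n)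
          (fun i => ∑ s : Fin (n + 1), (-1 : R) ^ (n + (s : ℕ)) * (Ls p (n + 1) (s : ℕ)) ^ q *
            (X i : R) ^ p ^ (E + (s : ℕ)))).det := by
    conv_lhs => rw [← Matrix.updateCol_eq_self M (Fin.last n)]
    rw [← Matrix.det_updateCol_smul]
    have hcols : (Lpoly p (n + 1) ^ q • fun j => M j (Fin.last n))
        = fun i => ∑ s : Fin (n + 1), (-1 : R) ^ (n + (s : ℕ)) * (Ls p (n + 1) (s : ℕ)) ^ q *
            (X i : R) ^ p ^ (E + (s : ℕ)) := by
      funext i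
      have hMi : M i (Fin.last n) = (X i : R) ^ p ^ (E + (n + 1)) := by
        simp [hM, hE]
      rw [Pi.smul_apply, hMi, smul_eq_mul, key i]
    rw [hcols]
  rw [step1, det_col_sum]
  apply Finset.sum_congr rfl
  intro s _
  have hcol : (fun i => (-1 : R) ^ (n + (s : ℕ)) * (Ls p (n + 1) (s : ℕ)) ^ q *
        (X i : R) ^ p ^ (E + (s : ℕ)))
      = (((-1 : R) ^ (n + (s : ℕ)) * (Ls p (n + 1) (s : ℕ)) ^ q) •
          fun i => (X i : R) ^ p ^ (E + (s : ℕ))) := by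
    funext i; simp [mul_assoc]
  rw [hcol, Matrix.det_updateCol_smul]
  have hmat : M.updateCol (Fin.last n) (fun i => (X i : R) ^ p ^ (E + (s : ℕ)))
      = Matrix.of (fun i j => (X i : R) ^ p ^ (if j = Fin.last n then e j + (s : ℕ) else e j)) := by
    funext i j
    rw [Matrix.updateCol_apply]
    by_cases hj : j = Fin.last n
    · subst hj; simp [hE, Nat.add_comm]
    · simp [hM, hj]
  rw [hmat, ← br]
  ring


/-- (The paper's `n` is `n+1`.)  For a sequence `e : Fin (n+1) → ℕ`:
`[e_1,…,e_n, e_{n+1}+(n+1)] = Σ_{s=0}^{n} (-1)^{(n+1)+s-1} [e_1,…,e_n, e_{n+1}+s] · Q_{n+1,s}^{p^{e_{n+1}}}`,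
where `Q_{n+1,s}` are the Dickson invariants. -/
theorem stmt6 (p n : ℕ) (hp : p.Prime) (hodd : Odd p) (e : Fin (n + 1) → ℕ)
    (Q : Fin (n + 1) → MvPolynomial (Fin (n + 1)) (ZMod p))
    (hQ : ∀ s : Fin (n + 1), Lpoly p (n + 1) * Q s = Ls p (n + 1) (s : ℕ)) :
    br p (fun j : Fin (n + 1) => if j = Fin.last n then e j + (n + 1) else e j) =
      ∑ s : Fin (n + 1),
        (-1 : MvPolynomial (Fin (n + 1)) (ZMod p)) ^ (n + (s : ℕ)) *
          br p (fun j : Fin (n + 1) => if j = Fin.last n then e j + (s : ℕ) else e j) *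
          (Q s) ^ p ^ e (Fin.last n) := by
  haveI : Fact p.Prime := ⟨hp⟩
  have hL : Lpoly p (n + 1) ^ p ^ e (Fin.last n) ≠ 0 :=
    pow_ne_zero _ (Lpoly_ne_zero p hp (n + 1))
  apply mul_left_cancel₀ hL
  rw [main_det p n hp hodd e, Finset.mul_sum]
  apply Finset.sum_congr rfl
  intro s _
  rw [← hQ s, mul_pow]
  ring
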